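/- Let G = ⊕_{n=1}^∞ ℤ. If {F_n} is a sequence of finite subsets of G such that ⋃_n F_n generates G as a group, then {F_n} does not satisfy the Besicovitch covering property. -/

import Mathlib

/-
Besicovitch fails as soon as there are arbitrarily large *satellite configurations*: finite sets
`A` with indices `ν` such that each translate `F (ν g) + g`, `g ∈ A`, contains `0` and no point of
`A` other than `g`. We take `A = {-f₀, …, -f_{N-1}}` with `f i ∈ F (n i)` and
`f i - f j ∉ F (n i)` for `i ≠ j`, built one element at a time. Since the `F n` generate, the new
element `f_N` can be taken in some `F n₀` with `f_N M ≠ 0`, for a coordinate `M` outside the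
supports of all earlier `F (n j)`; this rules out `f j - f_N ∈ F (n j)`. The earlier coordinates
`m j` chosen this way make the `f j` triangular (`f j (m j) ≠ 0`, `f j (m i) = 0` for `j < i`),
so subtracting any `f j` strictly decreases a lexicographic potential; choosing `f_N` minimal for
it among the candidates in the finite set `F n₀` rules out `f_N - f j ∈ F n₀`.
-/

open Finset

/-- The group `ℤ^∞ = ⊕_{n=1}^∞ ℤ`, realized as finitely supported functions `ℕ →₀ ℤ`. -/
abbrev ZInf := ℕ →₀ ℤ

/-- The Besicovitch covering property for a sequence of finite subsets of `ℤ^∞`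
(additive notation): there is `C` such that for every finite `A` and assignment
`g ↦ ν g`, some subfamily of the translates `F (ν g) + g` covers `A` with
multiplicity at most `C`. -/
def IsBesicovitch (F : ℕ → Finset ZInf) : Prop :=
  ∃ C : ℕ, ∀ (A : Finset ZInf) (ν : ZInf → ℕ), ∃ A' ⊆ A,
    (∀ a ∈ A, ∃ g ∈ A', a ∈ (F (ν g)).image (· + g)) ∧
    ∀ h : ZInf, (A'.filter (fun g => h ∈ (F (ν g)).image (· + g))).card ≤ C

open Function

theorem exists_mem_apply_ne_zero_of_closure_eq_top {G M : Type*} [AddGroup G] [AddMonoid M]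
    {s : Set G} (hs : AddSubgroup.closure s = ⊤) {φ : G →+ M} (hφ : φ ≠ 0) :
    ∃ x ∈ s, φ x ≠ 0 := by
  by_contra! h
  exact hφ (AddMonoidHom.eq_of_eqOn_dense hs h)

theorem Finsupp.exists_forall_mem_apply_eq_zero {α M : Type*} [Infinite α] [Zero M]
    (T : Finset (α →₀ M)) : ∃ a, ∀ g ∈ T, g a = 0 := by
  classical
  obtain ⟨a, ha⟩ := Infinite.exists_notMem_finset (T.biUnion Finsupp.support)
  exact ⟨a, fun g hg => Finsupp.notMem_support_iff.1 fun hga => ha (mem_biUnion.2 ⟨g, hg, hga⟩)⟩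

theorem exists_forall_sub_notMem_of_triangular {G : Type*} [AddGroup G] (ℓ : ℕ → G →+ ℤ)
    (f : ℕ → G) (N : ℕ) (hdiag : ∀ i < N, ℓ i (f i) ≠ 0)
    (htri : ∀ i < N, ∀ j < i, ℓ i (f j) = 0) (S : Finset G) (hS : S.Nonempty) :
    ∃ x ∈ S, ∀ j < N, x - f j ∉ S := by
  induction N generalizing S with
  | zero =>
    obtain ⟨x, hx⟩ := hS
    exact ⟨x, hx, fun j hj => absurd hj (Nat.not_lt_zero j)⟩
  | succ N ih =>
    -- Subtracting `f N` lowers `v` by `ℓ N (f N) ^ 2`, subtracting `f j`, `j < N`, leaves it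
    -- unchanged; so recurse on the minimizers of `v`.
    set v : G → ℤ := fun y => ℓ N (f N) * ℓ N y with hv
    obtain ⟨x₀, hx₀, hmin⟩ := S.exists_min_image v hS
    obtain ⟨x, hx, hxsub⟩ := ih (fun i hi => hdiag i (by omega))
      (fun i hi => htri i (by omega)) (S.filter (v · = v x₀)) ⟨x₀, mem_filter.2 ⟨hx₀, rfl⟩⟩
    obtain ⟨hxS, hvx⟩ := mem_filter.1 hx
    refine ⟨x, hxS, Nat.forall_lt_succ_right.2 ⟨fun j hj hmem => ?_, fun hmem => ?_⟩⟩
    · have hvj : v (x - f j) = v x := by simp [hv, htri N (by omega) j hj]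
      exact hxsub j hj (mem_filter.2 ⟨hmem, hvj.trans hvx⟩)
    · have hpos : 0 < ℓ N (f N) * ℓ N (f N) := mul_self_pos.2 (hdiag N (by omega))
      have hvN : v (x - f N) = v x - ℓ N (f N) * ℓ N (f N) := by simp [hv, mul_sub]
      linarith [hmin _ hmem]

structure IsSatelliteConfig (F : ℕ → Finset ZInf) (A : Finset ZInf) (ν : ZInf → ℕ) : Prop where
  zero_mem : ∀ g ∈ A, 0 ∈ (F (ν g)).image (· + g)
  eq_of_mem : ∀ g ∈ A, ∀ h ∈ A, h ∈ (F (ν g)).image (· + g) → h = g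

theorem not_isBesicovitch_of_forall_isSatelliteConfig {F : ℕ → Finset ZInf}
    (h : ∀ C : ℕ, ∃ A ν, C < A.card ∧ IsSatelliteConfig F A ν) : ¬ IsBesicovitch F := by
  rintro ⟨C, hC⟩
  obtain ⟨A, ν, hcard, hsat⟩ := h C
  obtain ⟨A', hA'A, hcov, hmult⟩ := hC A ν
  have hAA' : A ⊆ A' := fun a ha => by
    obtain ⟨g, hg, hag⟩ := hcov a ha
    rwa [hsat.eq_of_mem g (hA'A hg) a ha hag]
  have hfilter : A'.filter (fun g => 0 ∈ (F (ν g)).image (· + g)) = A :=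
    (filter_true_of_mem fun g hg => hsat.zero_mem g (hA'A hg)).trans (hA'A.antisymm hAA')
  have hmult0 := hmult 0
  rw [hfilter] at hmult0
  omega

structure IsSatelliteChain (F : ℕ → Finset ZInf) (N : ℕ) (n : ℕ → ℕ) (f : ℕ → ZInf)
    (m : ℕ → ℕ) : Prop where
  mem : ∀ i < N, f i ∈ F (n i)
  apply_ne_zero : ∀ i < N, f i (m i) ≠ 0
  apply_eq_zero : ∀ i < N, ∀ j < i, ∀ g ∈ F (n j), g (m i) = 0
  sub_notMem : ∀ i < N, ∀ j < N, i ≠ j → f i - f j ∉ F (n i)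

namespace IsSatelliteChain

variable {F : ℕ → Finset ZInf} {N : ℕ} {n : ℕ → ℕ} {f : ℕ → ZInf} {m : ℕ → ℕ}

theorem apply_eq_zero_of_lt (hc : IsSatelliteChain F N n f m) {i j : ℕ} (hi : i < N) (hj : j < i) :
    f j (m i) = 0 :=
  hc.apply_eq_zero i hi j hj _ (hc.mem j (hj.trans hi))

theorem injOn (hc : IsSatelliteChain F N n f m) : Set.InjOn f (Set.Iio N) := by
  intro i hi j hj hij
  by_contra hne
  rcases lt_or_gt_of_ne hne with h | h
  · exact hc.apply_ne_zero j hj (hij ▸ hc.apply_eq_zero_of_lt hj h)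
  · exact hc.apply_ne_zero i hi (hij ▸ hc.apply_eq_zero_of_lt hi h)

theorem extend (hgen : AddSubgroup.closure (⋃ n, (F n : Set ZInf)) = ⊤)
    (hc : IsSatelliteChain F N n f m) :
    ∃ n₀ x M, IsSatelliteChain F (N + 1) (update n N n₀) (update f N x) (update m N M) := by
  obtain ⟨M, hM⟩ := Finsupp.exists_forall_mem_apply_eq_zero ((range N).biUnion fun j => F (n j))
  have hFM : ∀ j < N, ∀ g ∈ F (n j), g M = 0 := fun j hj g hg =>
    hM g (mem_biUnion.2 ⟨j, mem_range.2 hj, hg⟩)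
  obtain ⟨x₀, hx₀, hx₀M⟩ := exists_mem_apply_ne_zero_of_closure_eq_top hgen
    (φ := Finsupp.applyAddHom M) fun h => by simpa using DFunLike.congr_fun h (Finsupp.single M 1)
  obtain ⟨n₀, hx₀⟩ := Set.mem_iUnion.1 hx₀
  obtain ⟨x, hxS, hxsub⟩ := exists_forall_sub_notMem_of_triangular
    (fun i => Finsupp.applyAddHom (m i)) f N hc.apply_ne_zero
    (fun i hi j hj => hc.apply_eq_zero_of_lt hi hj) ((F n₀).filter (· M ≠ 0))
    ⟨x₀, mem_filter.2 ⟨hx₀, hx₀M⟩⟩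
  obtain ⟨hx, hxM⟩ := mem_filter.1 hxS
  have hsub_x : ∀ j < N, x - f j ∉ F n₀ := fun j hj hmem =>
    hxsub j hj (mem_filter.2 ⟨hmem, by simpa [hFM j hj _ (hc.mem j hj)] using hxM⟩)
  have hsub_f : ∀ j < N, f j - x ∉ F (n j) := fun j hj hmem =>
    hxM (by simpa [hFM j hj _ (hc.mem j hj)] using hFM j hj _ hmem)
  refine ⟨n₀, x, M, ⟨?_, ?_, ?_, ?_⟩⟩ <;> simp only [Nat.forall_lt_succ_right]
  · exact ⟨fun i hi => by simpa [hi.ne] using hc.mem i hi, by simpa using hx⟩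
  · exact ⟨fun i hi => by simpa [hi.ne] using hc.apply_ne_zero i hi, by simpa using hxM⟩
  · refine ⟨fun i hi j hj => ?_, fun j hj => ?_⟩
    · simpa [hi.ne, (hj.trans hi).ne] using hc.apply_eq_zero i hi j hj
    · simpa [hj.ne] using hFM j hj
  · refine ⟨fun i hi => ⟨fun j hj hij => ?_, fun _ => ?_⟩, fun j hj _ => ?_, fun h => absurd rfl h⟩
    · simpa [hi.ne, hj.ne] using hc.sub_notMem i hi j hj hij
    · simpa [hi.ne] using hsub_f i hi
    · simpa [hj.ne] using hsub_x j hj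

theorem exists_isSatelliteConfig (hc : IsSatelliteChain F N n f m) :
    ∃ A ν, A.card = N ∧ IsSatelliteConfig F A ν := by
  classical
  set A := (range N).image (fun i => -f i)
  set idx := invFunOn (fun i => -f i) (Set.Iio N)
  have hidx : ∀ g ∈ A, idx g < N ∧ -f (idx g) = g := fun g hg => by
    have hex : ∃ i ∈ Set.Iio N, -f i = g := by simpa [A] using hg
    exact ⟨invFunOn_mem hex, invFunOn_eq hex⟩
  refine ⟨A, n ∘ idx, ?_, ⟨fun g hg => ?_, fun g hg h hh hmem => ?_⟩⟩
  · rw [card_image_of_injOn, card_range]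
    exact fun i hi j hj hij => hc.injOn (by simpa using hi) (by simpa using hj) (neg_injective hij)
  · obtain ⟨hk, hgk⟩ := hidx g hg
    exact mem_image.2 ⟨f (idx g), hc.mem _ hk, add_eq_zero_iff_neg_eq.2 hgk⟩
  · obtain ⟨hk, hgk⟩ := hidx g hg
    obtain ⟨hl, hhl⟩ := hidx h hh
    obtain ⟨y, hy, hyh⟩ := mem_image.1 hmem
    have hyf : y = f (idx g) - f (idx h) := calc
      y = h - g := eq_sub_of_add_eq hyh
      _ = -f (idx h) - -f (idx g) := by rw [hgk, hhl]
      _ = f (idx g) - f (idx h) := by abel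
    have hkl : idx g = idx h := by
      by_contra hne
      exact hc.sub_notMem _ hk _ hl hne (hyf ▸ hy)
    rw [← hgk, ← hhl, hkl]

end IsSatelliteChain

theorem exists_isSatelliteChain {F : ℕ → Finset ZInf}
    (hgen : AddSubgroup.closure (⋃ n, (F n : Set ZInf)) = ⊤) :
    ∀ N, ∃ n f m, IsSatelliteChain F N n f m
  | 0 => ⟨0, 0, 0, ⟨by simp, by simp, by simp, by simp⟩⟩
  | N + 1 => by
    obtain ⟨n, f, m, hc⟩ := exists_isSatelliteChain hgen N
    obtain ⟨n₀, x, M, hext⟩ := hc.extend hgen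
    exact ⟨_, _, _, hext⟩

/-- If `{F n}` is a sequence of finite subsets of `ℤ^∞` whose union generates the
group, then `{F n}` is not Besicovitch. -/
theorem zinf_no_generating_besicovitch_sequence
    (F : ℕ → Finset ZInf)
    (hgen : AddSubgroup.closure (⋃ n, (F n : Set ZInf)) = ⊤) :
    ¬ IsBesicovitch F := by
  refine not_isBesicovitch_of_forall_isSatelliteConfig fun C => ?_
  obtain ⟨n, f, m, hc⟩ := exists_isSatelliteChain hgen (C + 1)
  obtain ⟨A, ν, hcard, hsat⟩ := hc.exists_isSatelliteConfig
  exact ⟨A, ν, by omega, hsat⟩
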